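/- Let Q be a continuous symmetric bilinear form on a finite-dimensional real vector space V and w ∈ V with Q(w, w) > 0. Suppose (v_i) is a sequence of vectors with ‖v_i‖ → ∞, Q(v_i, v_i) > 0 for all i, Q(v_i, w) bounded above, Q(v_i, w) ≥ 0, and Q is negative definite on the orthogonal complement {u : Q(u, w) = 0} (Hodge–Riemann type signature). Then v_i/‖v_i‖ has no convergent subsequence with nonzero limit; in particular such a sequence cannot exist if the unit sphere is compact. (Equivalently: the set of v with Q(v,v) > 0, Q(v,w) bounded is bounded.) -/

import Mathlib

/-! On the compact unit sphere, the closed set where `Q x x ≥ 0` misses the kernel of `Q · w`,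
so `|Q x w|` is bounded below there by some `δ > 0`. By homogeneity `δ ‖v‖ ≤ |Q v w|` whenever
`Q v v ≥ 0`, which bounds `‖v‖` by `A / δ` on the set in question. -/

open Metric

section

variable {V : Type*} [NormedAddCommGroup V] [NormedSpace ℝ V] [FiniteDimensional ℝ V]

theorem LinearMap.continuous_apply_self_of_finiteDimensional (Q : V →ₗ[ℝ] V →ₗ[ℝ] ℝ) :
    Continuous fun v => Q v v :=
  Q.toContinuousBilinearMap.continuous₂.comp (continuous_id.prodMk continuous_id)

theorem LinearMap.exists_pos_mul_norm_le_abs_of_neg_on_ker (Q : V →ₗ[ℝ] V →ₗ[ℝ] ℝ)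
    (ℓ : V →ₗ[ℝ] ℝ) (hneg : ∀ u, ℓ u = 0 → u ≠ 0 → Q u u < 0) :
    ∃ δ > 0, ∀ v, 0 ≤ Q v v → δ * ‖v‖ ≤ |ℓ v| := by
  set S := sphere (0 : V) 1 ∩ {x | 0 ≤ Q x x}
  have hS : IsCompact S :=
    (isCompact_sphere 0 1).inter_right
      (isClosed_le continuous_const Q.continuous_apply_self_of_finiteDimensional)
  have hpos : ∀ x ∈ S, 0 < |ℓ x| := by
    rintro x ⟨hx1, hx2⟩
    refine abs_pos.2 fun hx => ?_
    exact (hneg x hx (ne_zero_of_mem_unit_sphere ⟨x, hx1⟩)).not_ge hx2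
  obtain ⟨δ, hδ, hδS⟩ :=
    hS.exists_forall_le' ℓ.continuous_of_finiteDimensional.abs.continuousOn hpos
  refine ⟨δ, hδ, fun v hv => ?_⟩
  rcases eq_or_ne v 0 with rfl | hv0
  · simp
  have hr : 0 < ‖v‖ := norm_pos_iff.2 hv0
  have hx : ‖v‖⁻¹ • v ∈ S := by
    refine ⟨by simp [norm_smul, hr.ne'], ?_⟩
    simp only [Set.mem_ofPred_eq, map_smul, LinearMap.smul_apply, smul_eq_mul]
    positivity
  calc δ * ‖v‖ ≤ |ℓ (‖v‖⁻¹ • v)| * ‖v‖ := by gcongr; exact hδS _ hx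
    _ = |ℓ v| := by
      simp only [map_smul, smul_eq_mul, abs_mul, abs_inv, abs_norm]
      field_simp

end

theorem hodge_riemann_boundedness_general
    {V : Type*} [NormedAddCommGroup V] [NormedSpace ℝ V]
    [FiniteDimensional ℝ V]
    (Q : V →ₗ[ℝ] V →ₗ[ℝ] ℝ)
    (w : V)
    (hneg : ∀ u : V, Q u w = 0 → u ≠ 0 → Q u u < 0)
    (A : ℝ) :
    Bornology.IsBounded {v : V | 0 ≤ Q v v ∧ 0 ≤ Q v w ∧ Q v w ≤ A} := by
  obtain ⟨δ, hδ, hnorm⟩ := Q.exists_pos_mul_norm_le_abs_of_neg_on_ker (Q.flip w) hneg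
  refine (isBounded_closedBall (x := 0) (r := A / δ)).subset fun v ⟨hvv, hvw, hvA⟩ => ?_
  rw [mem_closedBall_zero_iff, le_div_iff₀ hδ, mul_comm]
  calc δ * ‖v‖ ≤ |Q v w| := hnorm v hvv
    _ = Q v w := abs_of_nonneg hvw
    _ ≤ A := hvA

/-- Hodge–Riemann type boundedness: if a symmetric bilinear form `Q` on a
finite-dimensional real normed space satisfies `Q w w > 0` and is negative
definite on `{u | Q u w = 0}`, then for any `A` the set
`{v | Q v v ≥ 0, 0 ≤ Q v w ≤ A}` is bounded. -/
theorem hodge_riemann_boundedness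
    {V : Type*} [NormedAddCommGroup V] [NormedSpace ℝ V]
    [FiniteDimensional ℝ V]
    (Q : V →ₗ[ℝ] V →ₗ[ℝ] ℝ) (hsymm : ∀ u v, Q u v = Q v u)
    (w : V) (hw : 0 < Q w w)
    (hneg : ∀ u : V, Q u w = 0 → u ≠ 0 → Q u u < 0)
    (A : ℝ) :
    Bornology.IsBounded {v : V | 0 ≤ Q v v ∧ 0 ≤ Q v w ∧ Q v w ≤ A} :=
  hodge_riemann_boundedness_general Q w hneg A
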